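/- Let H be a bipartite graph with a bipartition (A,B). Let G be a graph, let 𝔱 = (T,β) be a tight tree decomposition of G, and let x ∈ V(T) be such that there is an induced H-model (X_v : v ∈ V(H)) in the torso 𝔱_x with |V(X_a)| = 1 for all a ∈ A. Then G has an induced minor isomorphic to H. -/

import Mathlib

/-- The induced subgraph of `G` on `S` is nonempty and connected, expressed via
walks of `G` staying inside `S`. -/
def ConnectedIn {V : Type*} (G : SimpleGraph V) (S : Set V) : Prop :=
  S.Nonempty ∧ ∀ a ∈ S, ∀ b ∈ S, ∃ w : G.Walk a b, ∀ v ∈ w.support, v ∈ S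

/-- An induced `H`-model in `G`: pairwise disjoint nonempty connected branch sets,
joined by an edge iff the corresponding vertices of `H` are adjacent. -/
def IsInducedModel {W V : Type*} (H : SimpleGraph W) (G : SimpleGraph V) (X : W → Set V) : Prop :=
  (∀ w, ConnectedIn G (X w)) ∧
  (∀ w w', w ≠ w' → Disjoint (X w) (X w')) ∧
  (∀ w w', H.Adj w w' → ∃ a ∈ X w, ∃ b ∈ X w', G.Adj a b) ∧
  (∀ w w', w ≠ w' → ¬ H.Adj w w' → ∀ a ∈ X w, ∀ b ∈ X w', ¬ G.Adj a b)

/-- `G` has an induced minor isomorphic to `H`. -/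
def InducedMinor {W V : Type*} (H : SimpleGraph W) (G : SimpleGraph V) : Prop :=
  ∃ X : W → Set V, IsInducedModel H G X

/-- An `H`-model in `G` (for the minor relation). -/
def IsMinorModel {W V : Type*} (H : SimpleGraph W) (G : SimpleGraph V) (X : W → Set V) : Prop :=
  (∀ w, ConnectedIn G (X w)) ∧
  (∀ w w', w ≠ w' → Disjoint (X w) (X w')) ∧
  (∀ w w', H.Adj w w' → ∃ a ∈ X w, ∃ b ∈ X w', G.Adj a b)

/-- `G` has a minor isomorphic to `H`. -/
def HasMinor {W V : Type*} (H : SimpleGraph W) (G : SimpleGraph V) : Prop :=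
  ∃ X : W → Set V, IsMinorModel H G X

/-- `(T, β)` is a tree decomposition of `G`. -/
structure IsTreeDecomp {V ι : Type*} (G : SimpleGraph V) (T : SimpleGraph ι)
    (β : ι → Finset V) : Prop where
  tree : T.IsTree
  bags_connected : ∀ v : V, ConnectedIn T {i | v ∈ β i}
  edges_covered : ∀ u v : V, G.Adj u v → ∃ i, u ∈ β i ∧ v ∈ β i

/-- `G` has a tree decomposition of width at most `w`. -/
def TreewidthLE {V : Type*} (G : SimpleGraph V) (w : ℕ) : Prop :=
  ∃ (n : ℕ) (T : SimpleGraph (Fin n)) (β : Fin n → Finset V),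
    IsTreeDecomp G T β ∧ ∀ i, (β i).card ≤ w + 1

noncomputable def treewidth {V : Type*} (G : SimpleGraph V) : ℕ :=
  sInf {w | TreewidthLE G w}

/-- `G` has a path decomposition of width at most `w`. -/
def PathwidthLE {V : Type*} (G : SimpleGraph V) (w : ℕ) : Prop :=
  ∃ (n : ℕ) (β : Fin n → Finset V),
    IsTreeDecomp G (SimpleGraph.pathGraph n) β ∧ ∀ i, (β i).card ≤ w + 1

noncomputable def pathwidth {V : Type*} (G : SimpleGraph V) : ℕ :=
  sInf {w | PathwidthLE G w}

/-- A hereditary class of finite graphs (each finite graph is represented, up to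
isomorphism, on some `Fin n`): the class is closed under induced subgraphs,
i.e. under pulling back along injections. -/
def Hereditary (𝒢 : ∀ n : ℕ, SimpleGraph (Fin n) → Prop) : Prop :=
  ∀ (n m : ℕ) (G : SimpleGraph (Fin n)) (f : Fin m ↪ Fin n),
    𝒢 n G → 𝒢 m (G.comap ⇑f)

/-- A graph `J` is `ζ`-jagged if every induced subgraph with pathwidth at least 3
has at least `ζ` vertices of degree two (in that induced subgraph). -/
def Jagged {V : Type*} (ζ : ℕ) (J : SimpleGraph V) : Prop :=
  ∀ s : Set V, 3 ≤ pathwidth (J.induce s) →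
    ζ ≤ {v | v ∈ s ∧ ({w | w ∈ s ∧ J.Adj v w}).ncard = 2}.ncard

/-- A graph is `d`-degenerate if every nonempty induced subgraph has a vertex of
degree at most `d`. -/
def Degenerate {V : Type*} (d : ℕ) (G : SimpleGraph V) : Prop :=
  ∀ s : Set V, s.Nonempty → ∃ v ∈ s, ({w | w ∈ s ∧ G.Adj v w}).ncard ≤ d

/-- The complete binary tree of radius `ρ`: vertices are binary strings of length
at most `ρ`, and `x` is adjacent to `b :: x` (its children). -/
def binTree (ρ : ℕ) : SimpleGraph {l : List Bool // l.length ≤ ρ} where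
  Adj x y := (∃ b : Bool, (x : List Bool) = b :: (y : List Bool)) ∨
             (∃ b : Bool, (y : List Bool) = b :: (x : List Bool))
  symm := by constructor; rintro x y (h | h); exact Or.inr h; exact Or.inl h
  loopless := by
    constructor
    rintro x (⟨b, hb⟩ | ⟨b, hb⟩) <;>
      · have := congrArg List.length hb
        simp at this

/-- The `n × n` square grid graph. -/
def gridGraph (n : ℕ) : SimpleGraph (Fin n × Fin n) where
  Adj p q := (p.1 = q.1 ∧ ((p.2 : ℕ) + 1 = (q.2 : ℕ) ∨ (q.2 : ℕ) + 1 = (p.2 : ℕ))) ∨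
             (p.2 = q.2 ∧ ((p.1 : ℕ) + 1 = (q.1 : ℕ) ∨ (q.1 : ℕ) + 1 = (p.1 : ℕ)))
  symm := by
    constructor
    rintro p q (⟨h1, h2⟩ | ⟨h1, h2⟩)
    · exact Or.inl ⟨h1.symm, h2.symm⟩
    · exact Or.inr ⟨h1.symm, h2.symm⟩
  loopless := by constructor; rintro p (⟨_, h | h⟩ | ⟨_, h | h⟩) <;> omega

/-- A graph is planar iff it is isomorphic to a minor of some square grid. -/
def IsPlanar {W : Type*} (H : SimpleGraph W) : Prop :=
  ∃ n : ℕ, HasMinor H (gridGraph n)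

/-- `S` is the vertex set of an induced path in `G` from `x` to `y`. -/
def IsInducedPathSet {V : Type*} (G : SimpleGraph V) (S : Set V) (x y : V) : Prop :=
  ∃ p : G.Walk x y, p.IsPath ∧ {v | v ∈ p.support} = S ∧
    ∀ u v : V, u ∈ p.support → v ∈ p.support → G.Adj u v → p.toSubgraph.Adj u v

/-- `G` has a stable strong `(κ, lam)`-block: a stable set `B` of at least `κ`
vertices together with, for each unordered pair of distinct vertices of `B`,
at least `lam` pairwise internally disjoint induced paths joining them, such that
path systems of distinct pairs meet exactly in the shared endpoints. -/
def HasStableStrongBlock {V : Type*} (G : SimpleGraph V) (κ lam : ℕ) : Prop :=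
  ∃ (B : Set V) (P : V → V → Fin lam → Set V),
    κ ≤ B.ncard ∧
    (∀ x ∈ B, ∀ y ∈ B, x ≠ y → ¬ G.Adj x y) ∧
    (∀ x ∈ B, ∀ y ∈ B, x ≠ y →
      (∀ i, IsInducedPathSet G (P x y i) x y) ∧
      (∀ i j, i ≠ j → ∀ v, v ∈ P x y i → v ∈ P x y j → v = x ∨ v = y) ∧
      (∀ i, P x y i = P y x i)) ∧
    (∀ x ∈ B, ∀ y ∈ B, ∀ x' ∈ B, ∀ y' ∈ B, x ≠ y → x' ≠ y' →
      ({x, y} : Set V) ≠ {x', y'} →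
      (⋃ i, P x y i) ∩ (⋃ i, P x' y' i) = (({x, y} : Set V) ∩ {x', y'}))

/-- `G` is `(κ, lam)`-separable: there is no stable strong `(κ, lam)`-block in `G`. -/
def Separable {V : Type*} (G : SimpleGraph V) (κ lam : ℕ) : Prop :=
  ¬ HasStableStrongBlock G κ lam

/-- In the tree `T` rooted at `u`, `w` is a child of `v`. -/
def IsChild {α : Type*} (T : SimpleGraph α) (u v w : α) : Prop :=
  T.Adj v w ∧ T.dist u w = T.dist u v + 1

/-- `(T, u)` is a `(δ, ρ)`-regular rooted tree: `T` is a tree, every vertex is at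
distance at most `ρ` from `u`, and every vertex at distance less than `ρ` from `u`
has exactly `δ` children. -/
def RootedRegular {α : Type*} (T : SimpleGraph α) (u : α) (δ ρ : ℕ) : Prop :=
  T.IsTree ∧ (∀ v, T.dist u v ≤ ρ) ∧
    ∀ v, T.dist u v < ρ → {w | IsChild T u v w}.ncard = δ

/-- The rooted tree induced by `T` on `s`, with root `r`, is a rooted subtree of
`(T, u)`: it is a tree and every child relation in it is a child relation in `(T, u)`. -/
def IsRootedSubtree {α : Type*} (T : SimpleGraph α) (u : α) (s : Set α) (r : ↥s) : Prop :=
  (T.induce s).IsTree ∧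
    ∀ v w : ↥s, IsChild (T.induce s) r v w → IsChild T u (↑v) (↑w)

open Classical in
/-- The `i`-ancestor of `v` in the tree `T` rooted at `u`: the vertex on the unique
`u`–`v` path at distance `i` from `v`. -/
noncomputable def ancestor {α : Type*} (T : SimpleGraph α) (u v : α) (i : ℕ) : α :=
  if h : ∃ w, T.dist u w + i = T.dist u v ∧ T.dist w v = i then h.choose else v

/-- The rooted tree `T` (mapped into `G` by `f`) is path-uniform in `G`. -/
def PathUniform {V β : Type*} (G : SimpleGraph V) (f : β → V) (T : SimpleGraph β)
    (r : β) (ρ : ℕ) : Prop :=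
  ∀ v v' : β, T.dist r v = ρ → T.dist r v' = ρ → ∀ i j : ℕ, i ≤ ρ → j ≤ ρ →
    (G.Adj (f (ancestor T r v i)) (f (ancestor T r v j)) ↔
      G.Adj (f (ancestor T r v' i)) (f (ancestor T r v' j)))

/-- The rooted tree `T` (mapped into `G` by `f`) is path-induced in `G`. -/
def PathInduced {V β : Type*} (G : SimpleGraph V) (f : β → V) (T : SimpleGraph β)
    (r : β) (ρ : ℕ) : Prop :=
  ∀ v : β, T.dist r v = ρ → ∀ i j : ℕ, i ≤ ρ → j ≤ ρ →
    (G.Adj (f (ancestor T r v i)) (f (ancestor T r v j)) ↔ (i + 1 = j ∨ j + 1 = i))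

/-- The rooted tree `T` (mapped into `G` by `f`) is branch-induced in `G`: every
`G`-edge between vertices of `T` that is not a `T`-edge joins a vertex to one of
its ancestors. -/
def BranchInduced {V β : Type*} (G : SimpleGraph V) (f : β → V) (T : SimpleGraph β)
    (r : β) : Prop :=
  ∀ v w : β, G.Adj (f v) (f w) → ¬ T.Adj v w →
    (T.dist r v + T.dist v w = T.dist r w ∨ T.dist r w + T.dist w v = T.dist r v)

/-- `G` has a (not necessarily induced) subgraph isomorphic to `H`. -/
def HasSubgraphIso {W V : Type*} (H : SimpleGraph W) (G : SimpleGraph V) : Prop :=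
  ∃ f : W → V, Function.Injective f ∧ ∀ a b, H.Adj a b → G.Adj (f a) (f b)

/-- The spanning subgraph of `G` consisting of the edges of color `i` under the
edge-coloring `F`. -/
def colorSub {V : Type*} {c : ℕ} (G : SimpleGraph V) (F : V → V → Fin c) (i : Fin c) :
    SimpleGraph V where
  Adj u v := G.Adj u v ∧ F u v = i ∧ F v u = i
  symm := by constructor; rintro u v ⟨h1, h2, h3⟩; exact ⟨h1.symm, h3, h2⟩
  loopless := by constructor; rintro u ⟨h, _, _⟩; exact G.loopless.irrefl u h

/-- Distance from `a` to `b` within the induced subgraph `G[S]` (via walks of `G`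
all of whose vertices lie in `S`). -/
noncomputable def distIn {V : Type*} (G : SimpleGraph V) (S : Set V) (a b : V) : ℕ :=
  sInf {n | ∃ w : G.Walk a b, w.length = n ∧ ∀ v ∈ w.support, v ∈ S}

/-- `(a 0, …, a (σ+1))` is a `(σ, θ)`-`X`-abyss in `G`. -/
def IsAbyss {V : Type*} (G : SimpleGraph V) (X : Set V) (σ θ : ℕ) (a : ℕ → V) : Prop :=
  ∃ (S : ℕ → Set V) (ρ : ℕ → ℕ),
    S 0 ⊆ X ∧ ConnectedIn G (S 0) ∧ (∀ k ≤ σ + 1, a k ∈ S 0) ∧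
    (∀ i < σ,
      S (i + 1) ⊆ {v | v ∈ S i ∧ distIn G (S i) (a i) v = ρ i + 1} ∧
      ConnectedIn G (S (i + 1)) ∧
      ∀ k, i + 1 ≤ k → k ≤ σ + 1 → a k ∈ S (i + 1)) ∧
    θ ≤ G.dist (a σ) (a (σ + 1))

/-- The torso of a tree decomposition `(T, β)` of `G` at the node `x`. -/
def torso {V ι : Type*} (G : SimpleGraph V) (T : SimpleGraph ι) (β : ι → Finset V)
    (x : ι) : SimpleGraph {v : V // v ∈ β x} where
  Adj u v := u ≠ v ∧ (G.Adj ↑u ↑v ∨ ∃ y, T.Adj x y ∧ ↑u ∈ β y ∧ ↑v ∈ β y)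
  symm := by
    constructor
    rintro u v ⟨hne, h | ⟨y, hy, h1, h2⟩⟩
    · exact ⟨hne.symm, Or.inl h.symm⟩
    · exact ⟨hne.symm, Or.inr ⟨y, hy, h2, h1⟩⟩
  loopless := by constructor; rintro u ⟨hne, _⟩; exact hne rfl

/-- The vertex set of the component of `T - x` containing `y` (denoted `T_{y∖x}`). -/
def compAway {ι : Type*} (T : SimpleGraph ι) (y x : ι) : Set ι :=
  {z | ∃ w : T.Walk y z, x ∉ w.support}

/-- A tree decomposition `(T, β)` of `G` is tight. -/
def Tight {V ι : Type*} (G : SimpleGraph V) (T : SimpleGraph ι) (β : ι → Finset V) : Prop :=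
  ∀ x y, T.Adj x y →
    ∃ v₀ ∈ (⋃ z ∈ compAway T y x, (β z : Set V)) \ (⋃ z ∈ compAway T x y, (β z : Set V)),
      ∀ u : V, u ∈ β x → u ∈ β y →
        ∃ c : V, G.Adj u c ∧ ∃ w : G.Walk v₀ c, ∀ p ∈ w.support,
          p ∈ (⋃ z ∈ compAway T y x, (β z : Set V)) \ (⋃ z ∈ compAway T x y, (β z : Set V))

/-- `G` has a subgraph isomorphic to some subdivision of the complete graph `K_μ`:
equivalently, there are `μ` branch vertices joined by pairwise internally disjoint
paths of nonzero length. -/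
def HasKSubdivision {V : Type*} (μ : ℕ) (G : SimpleGraph V) : Prop :=
  ∃ b : Fin μ → V, Function.Injective b ∧
    ∃ P : ∀ i j : Fin μ, i < j → G.Walk (b i) (b j),
      (∀ i j (h : i < j), (P i j h).IsPath) ∧
      (∀ i j (h : i < j), ∀ m : Fin μ, b m ∈ (P i j h).support → m = i ∨ m = j) ∧
      (∀ i j (h : i < j), ∀ k l (h' : k < l), (i, j) ≠ (k, l) →
        ∀ v : V, v ∈ (P i j h).support → v ∈ (P k l h').support →
          (v = b i ∨ v = b j) ∧ (v = b k ∨ v = b l))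



/-!
Tightness provides, for every neighbour `y` of `x`, a connected set `C y` lying strictly on
the `y`-side of the tree edge `xy` and dominating the adhesion `β(x,y)`. Since the adhesion is a
clique of the torso and `B` is stable, at most one branch set over `B` meets `β(x,y)`; give it
`C y`. Paths through `C y` then replace the torso edges inside a branch set (branch sets over
`A` are singletons and contain none), edges from `C y` into the adhesion realise the torso edges
between branch sets, and no unwanted edges appear: the sides of distinct neighbours of `x` are
disjoint and non-adjacent, and a side sees `β(x)` only through its adhesion.
-/

open SimpleGraph

section WalksWithin

variable {V V' : Type*} {G : SimpleGraph V} {S S' : Set V} {a b c v₀ : V}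

def ReachIn (G : SimpleGraph V) (S : Set V) (a b : V) : Prop :=
  ∃ w : G.Walk a b, ∀ v ∈ w.support, v ∈ S

namespace ReachIn

theorem refl (ha : a ∈ S) : ReachIn G S a a :=
  ⟨.nil, by simpa using ha⟩

theorem of_adj (ha : a ∈ S) (hb : b ∈ S) (h : G.Adj a b) : ReachIn G S a b :=
  ⟨.cons h .nil, by simp [ha, hb]⟩

theorem symm : ReachIn G S a b → ReachIn G S b a
  | ⟨w, hw⟩ => ⟨w.reverse, by simpa using hw⟩

theorem trans : ReachIn G S a b → ReachIn G S b c → ReachIn G S a c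
  | ⟨w, hw⟩, ⟨w', hw'⟩ => ⟨w.append w', by
      simp only [Walk.mem_support_append_iff]
      rintro v (hv | hv)
      exacts [hw v hv, hw' v hv]⟩

theorem mono (hS : S ⊆ S') : ReachIn G S a b → ReachIn G S' a b
  | ⟨w, hw⟩ => ⟨w, fun v hv => hS (hw v hv)⟩

theorem mem_right : ReachIn G S a b → b ∈ S
  | ⟨w, hw⟩ => hw b w.end_mem_support

theorem map {G' : SimpleGraph V'} {S' : Set V'} {f : V → V'} (hf : ∀ v ∈ S, f v ∈ S')
    (hadj : ∀ u ∈ S, ∀ v ∈ S, G.Adj u v → ReachIn G' S' (f u) (f v)) :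
    ReachIn G S a b → ReachIn G' S' (f a) (f b) := by
  rintro ⟨w, hw⟩
  induction w with
  | nil => exact refl (hf _ (hw _ (by simp)))
  | cons h w ih =>
    have hw' : ∀ v ∈ w.support, v ∈ S := fun v hv => hw v (by simp [hv])
    exact (hadj _ (hw _ (by simp)) _ (hw' _ w.start_mem_support) h).trans (ih hw')

end ReachIn

theorem ConnectedIn.reachIn (h : ConnectedIn G S) (ha : a ∈ S) (hb : b ∈ S) :
    ReachIn G S a b :=
  h.2 a ha b hb

def reachSet (G : SimpleGraph V) (S : Set V) (v₀ : V) : Set V :=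
  {p | ReachIn G S v₀ p}

theorem reachSet_subset : reachSet G S v₀ ⊆ S :=
  fun _ h => h.mem_right

theorem ReachIn.reachIn_reachSet (h : ReachIn G S v₀ a) : ReachIn G (reachSet G S v₀) v₀ a := by
  classical
  obtain ⟨w, hw⟩ := h
  exact ⟨w, fun q hq => ⟨w.takeUntil q hq,
    fun r hr => hw r (Walk.support_takeUntil_subset_support _ hq hr)⟩⟩

theorem connectedIn_reachSet (h : v₀ ∈ S) : ConnectedIn G (reachSet G S v₀) :=
  ⟨⟨v₀, .refl h⟩, fun _ ha _ hb => ha.reachIn_reachSet.symm.trans hb.reachIn_reachSet⟩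

end WalksWithin

section TreeSides

variable {ι : Type*} {T : SimpleGraph ι} {x y y' i z : ι}

theorem SimpleGraph.IsAcyclic.mem_edges_of_adj (hT : T.IsAcyclic) (hxy : T.Adj x y)
    (w : T.Walk x y) : s(x, y) ∈ w.edges :=
  isBridge_iff_forall_walk_mem_edges.mp (isAcyclic_iff_forall_adj_isBridge.mp hT hxy) w

theorem self_mem_compAway (h : x ≠ y) : x ∈ compAway T x y :=
  ⟨.nil, by simpa using h.symm⟩

theorem disjoint_compAway_swap (hT : T.IsAcyclic) (hxy : T.Adj x y) :
    Disjoint (compAway T y x) (compAway T x y) := by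
  rw [Set.disjoint_left]
  rintro z ⟨w₁, hw₁⟩ ⟨w₂, hw₂⟩
  have h := hT.mem_edges_of_adj hxy (w₂.append w₁.reverse)
  rw [Walk.edges_append, List.mem_append, Walk.edges_reverse, List.mem_reverse] at h
  rcases h with h | h
  · exact hw₂ (w₂.snd_mem_support_of_mem_edges h)
  · exact hw₁ (w₁.fst_mem_support_of_mem_edges h)

theorem mem_compAway_or_mem_compAway_swap (hT : T.Connected) (hne : x ≠ y) (z : ι) :
    z ∈ compAway T y x ∨ z ∈ compAway T x y := by
  classical
  let p : T.Walk y z := (hT.preconnected y z).some.toPath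
  have hp : p.IsPath := (hT.preconnected y z).some.toPath.2
  by_cases hx : x ∈ p.support
  · refine Or.inr ⟨p.dropUntil x hx, fun hy => ?_⟩
    have hnd := hp.support_nodup
    rw [← p.take_spec hx, Walk.support_append] at hnd
    rw [← Walk.cons_tail_support] at hy
    exact List.disjoint_of_nodup_append hnd (p.takeUntil x hx).start_mem_support
      ((List.mem_cons.mp hy).resolve_left hne.symm)
  · exact Or.inl ⟨p, hx⟩

theorem disjoint_compAway_of_ne (hT : T.IsAcyclic) (hxy : T.Adj x y) (hxy' : T.Adj x y')
    (hne : y ≠ y') : Disjoint (compAway T y x) (compAway T y' x) := by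
  rw [Set.disjoint_left]
  rintro z ⟨w₁, hw₁⟩ ⟨w₂, hw₂⟩
  have h := hT.mem_edges_of_adj hxy.symm ((w₁.append w₂.reverse).concat hxy'.symm)
  simp only [Walk.edges_concat, Walk.edges_append, Walk.edges_reverse, List.concat_eq_append,
    List.mem_append, List.mem_reverse, List.mem_singleton, Sym2.eq_iff] at h
  rcases h with (h | h) | h
  · exact hw₁ (w₁.snd_mem_support_of_mem_edges h)
  · exact hw₂ (w₂.snd_mem_support_of_mem_edges h)
  · rcases h with ⟨h, -⟩ | ⟨h, -⟩
    exacts [hne h, hxy.ne' h]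

theorem mem_support_of_mem_compAway (hT : T.IsAcyclic) (hxy : T.Adj x y)
    (hi : i ∈ compAway T y x) (hz : z ∈ compAway T x y) (w : T.Walk i z) :
    x ∈ w.support ∧ y ∈ w.support := by
  obtain ⟨wi, hwi⟩ := hi
  obtain ⟨wz, hwz⟩ := hz
  have hdisj := Set.disjoint_left.mp (disjoint_compAway_swap hT hxy)
  constructor
  · by_contra hx
    refine hdisj ⟨wi.append w, ?_⟩ ⟨wz, hwz⟩
    rw [Walk.mem_support_append_iff]
    exact not_or.mpr ⟨hwi, hx⟩
  · by_contra hy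
    refine hdisj ⟨wi, hwi⟩ ⟨wz.append w.reverse, ?_⟩
    rw [Walk.mem_support_append_iff, Walk.support_reverse, List.mem_reverse]
    exact not_or.mpr ⟨hwz, hy⟩

end TreeSides

section StrictSide

variable {V ι : Type*} {G : SimpleGraph V} {T : SimpleGraph ι} {β : ι → Finset V}
  {x y y' i z : ι} {p q u : V}

/-- `β(V(T_{y∖x})) ∖ β(V(T_{x∖y}))`: the vertices occurring only in bags on the `y`-side of
the tree edge `xy`. -/
def strictSide (T : SimpleGraph ι) (β : ι → Finset V) (x y : ι) : Set V :=
  (⋃ z ∈ compAway T y x, (β z : Set V)) \ (⋃ z ∈ compAway T x y, (β z : Set V))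

theorem IsTreeDecomp.mem_adhesion (hdec : IsTreeDecomp G T β) (hxy : T.Adj x y)
    (hi : i ∈ compAway T y x) (hz : z ∈ compAway T x y) (hui : u ∈ β i) (huz : u ∈ β z) :
    u ∈ β x ∧ u ∈ β y := by
  obtain ⟨w, hw⟩ := (hdec.bags_connected u).2 i hui z huz
  obtain ⟨hx, hy⟩ := mem_support_of_mem_compAway hdec.tree.isAcyclic hxy hi hz w
  exact ⟨hw x hx, hw y hy⟩

theorem notMem_bag_of_mem_strictSide (hxy : x ≠ y) (hp : p ∈ strictSide T β x y) :
    p ∉ β x :=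
  fun h => hp.2 (Set.mem_biUnion (self_mem_compAway hxy) h)

theorem mem_compAway_of_mem_strictSide (hT : T.Connected) (hxy : x ≠ y)
    (hp : p ∈ strictSide T β x y) (hi : p ∈ β i) : i ∈ compAway T y x :=
  (mem_compAway_or_mem_compAway_swap hT hxy i).resolve_right
    fun h => hp.2 (Set.mem_biUnion h hi)

theorem IsTreeDecomp.mem_adhesion_of_adj (hdec : IsTreeDecomp G T β) (hxy : T.Adj x y)
    (hp : p ∈ strictSide T β x y) (h : G.Adj p u) (hu : u ∉ strictSide T β x y) :
    u ∈ β x ∧ u ∈ β y := by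
  obtain ⟨i, hpi, hui⟩ := hdec.edges_covered p u h
  have hi := mem_compAway_of_mem_strictSide hdec.tree.connected hxy.ne hp hpi
  obtain ⟨z, hz, huz⟩ : ∃ z ∈ compAway T x y, u ∈ β z := by
    by_contra! h'
    exact hu ⟨Set.mem_biUnion hi hui, by simpa using h'⟩
  exact hdec.mem_adhesion hxy hi hz hui huz

theorem IsTreeDecomp.disjoint_strictSide (hdec : IsTreeDecomp G T β) (hxy : T.Adj x y)
    (hxy' : T.Adj x y') (hne : y ≠ y') :
    Disjoint (strictSide T β x y) (strictSide T β x y') := by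
  rw [Set.disjoint_left]
  intro p hp hp'
  obtain ⟨i, hi, hpi⟩ : ∃ i ∈ compAway T y x, p ∈ β i := by simpa using hp.1
  exact Set.disjoint_left.mp (disjoint_compAway_of_ne hdec.tree.isAcyclic hxy hxy' hne) hi
    (mem_compAway_of_mem_strictSide hdec.tree.connected hxy'.ne hp' hpi)

theorem IsTreeDecomp.not_adj_of_mem_strictSide (hdec : IsTreeDecomp G T β) (hxy : T.Adj x y)
    (hxy' : T.Adj x y') (hne : y ≠ y') (hp : p ∈ strictSide T β x y)
    (hq : q ∈ strictSide T β x y') : ¬ G.Adj p q := by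
  intro h
  obtain ⟨i, hpi, hqi⟩ := hdec.edges_covered p q h
  exact Set.disjoint_left.mp (disjoint_compAway_of_ne hdec.tree.isAcyclic hxy hxy' hne)
    (mem_compAway_of_mem_strictSide hdec.tree.connected hxy.ne hp hpi)
    (mem_compAway_of_mem_strictSide hdec.tree.connected hxy'.ne hq hqi)

structure DominatesAdhesions (G : SimpleGraph V) (T : SimpleGraph ι) (β : ι → Finset V) (x : ι)
    (C : ι → Set V) : Prop where
  subset_strictSide : ∀ ⦃y⦄, T.Adj x y → C y ⊆ strictSide T β x y
  connectedIn : ∀ ⦃y⦄, T.Adj x y → ConnectedIn G (C y)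
  exists_adj : ∀ ⦃y⦄, T.Adj x y → ∀ u ∈ β x, u ∈ β y → ∃ c ∈ C y, G.Adj u c

theorem Tight.exists_dominatesAdhesions (htight : Tight G T β) (x : ι) :
    ∃ C, DominatesAdhesions G T β x C := by
  have hC : ∀ y, ∃ C : Set V, T.Adj x y → C ⊆ strictSide T β x y ∧ ConnectedIn G C ∧
      ∀ u ∈ β x, u ∈ β y → ∃ c ∈ C, G.Adj u c := by
    intro y
    by_cases hxy : T.Adj x y
    · obtain ⟨v₀, hv₀, hdom⟩ := htight x y hxy
      refine ⟨reachSet G (strictSide T β x y) v₀, fun _ =>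
        ⟨reachSet_subset, connectedIn_reachSet hv₀, fun u hux huy => ?_⟩⟩
      obtain ⟨c, huc, hc⟩ := hdom u hux huy
      exact ⟨c, hc, huc⟩
    · exact ⟨∅, fun h => absurd h hxy⟩
  choose C hC using hC
  exact ⟨C, ⟨fun y h => (hC y h).1, fun y h => (hC y h).2.1, fun y h => (hC y h).2.2⟩⟩

end StrictSide

section InducedModel

variable {W V : Type*} {H : SimpleGraph W} {G : SimpleGraph V} {X : W → Set V} {w w' : W}
  {u u' : V}

theorem IsInducedModel.ne_of_mem (hX : IsInducedModel H G X) (hne : w ≠ w') (hu : u ∈ X w)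
    (hu' : u' ∈ X w') : u ≠ u' :=
  (hX.2.1 w w' hne).ne_of_mem hu hu'

theorem IsInducedModel.adj_of_adj (hX : IsInducedModel H G X) (hne : w ≠ w') (hu : u ∈ X w)
    (hu' : u' ∈ X w') (h : G.Adj u u') : H.Adj w w' := by
  by_contra hH
  exact hX.2.2.2 w w' hne hH u hu u' hu' h

end InducedModel

section LiftModel

variable {W V ι : Type*} {H : SimpleGraph W} {G : SimpleGraph V} {T : SimpleGraph ι}
  {β : ι → Finset V} {x y : ι} {B : Set W} {X : W → Set {v // v ∈ β x}} {C : ι → Set V}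
  {w w' : W} {p q : V}

theorem torso_adj_of_mem_adhesion {u v : {v // v ∈ β x}} (hne : u ≠ v) (hxy : T.Adj x y)
    (hu : (u : V) ∈ β y) (hv : (v : V) ∈ β y) : (torso G T β x).Adj u v :=
  ⟨hne, Or.inr ⟨y, hxy, hu, hv⟩⟩

theorem IsInducedModel.adj_of_mem_adhesion (hX : IsInducedModel H (torso G T β x) X)
    (hxy : T.Adj x y) (hne : w ≠ w') {u u' : {v // v ∈ β x}} (hu : u ∈ X w) (hu' : u' ∈ X w')
    (huy : (u : V) ∈ β y) (hu'y : (u' : V) ∈ β y) : H.Adj w w' :=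
  hX.adj_of_adj hne hu hu' (torso_adj_of_mem_adhesion (hX.ne_of_mem hne hu hu') hxy huy hu'y)

variable (T) in
def Attaches (B : Set W) (X : W → Set {v // v ∈ β x}) (w : W) (y : ι) : Prop :=
  w ∈ B ∧ T.Adj x y ∧ ∃ u ∈ X w, (u : V) ∈ β y

theorem Attaches.eq (hX : IsInducedModel H (torso G T β x) X)
    (hB : ∀ b ∈ B, ∀ b' ∈ B, ¬ H.Adj b b') (h : Attaches T B X w y) (h' : Attaches T B X w' y) :
    w = w' := by
  obtain ⟨hw, hxy, u, hu, huy⟩ := h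
  obtain ⟨hw', -, u', hu', hu'y⟩ := h'
  by_contra hne
  exact hB w hw w' hw' (hX.adj_of_mem_adhesion hxy hne hu hu' huy hu'y)

variable (T) in
def liftModel (C : ι → Set V) (B : Set W) (X : W → Set {v // v ∈ β x}) (w : W) : Set V :=
  Subtype.val '' X w ∪ ⋃ y ∈ {y | Attaches T B X w y}, C y

theorem mem_liftModel :
    p ∈ liftModel T C B X w ↔ (∃ u ∈ X w, (u : V) = p) ∨ ∃ y, Attaches T B X w y ∧ p ∈ C y := by
  simp [liftModel]

theorem val_mem_liftModel {u : {v // v ∈ β x}} (hu : u ∈ X w) : (u : V) ∈ liftModel T C B X w :=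
  Or.inl ⟨u, hu, rfl⟩

theorem subset_liftModel (h : Attaches T B X w y) : C y ⊆ liftModel T C B X w :=
  fun _ hp => Or.inr (Set.mem_biUnion h hp)

theorem reachIn_liftModel_of_torso_adj (hC : DominatesAdhesions G T β x C)
    (hsub : ∀ w ∉ B, (X w).Subsingleton) {u v : {v // v ∈ β x}} (hu : u ∈ X w) (hv : v ∈ X w)
    (h : (torso G T β x).Adj u v) : ReachIn G (liftModel T C B X w) u v := by
  obtain ⟨hne, hG | ⟨y, hxy, huy, hvy⟩⟩ := h
  · exact .of_adj (val_mem_liftModel hu) (val_mem_liftModel hv) hG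
  have hw : w ∈ B := by
    by_contra hw
    exact hne (hsub w hw hu hv)
  have hCy := subset_liftModel (C := C) ⟨hw, hxy, u, hu, huy⟩
  obtain ⟨cu, hcu, hucu⟩ := hC.exists_adj hxy u u.2 huy
  obtain ⟨cv, hcv, hvcv⟩ := hC.exists_adj hxy v v.2 hvy
  exact ((ReachIn.of_adj (val_mem_liftModel hu) (hCy hcu) hucu).trans
    (((hC.connectedIn hxy).reachIn hcu hcv).mono hCy)).trans
    (.of_adj (hCy hcv) (val_mem_liftModel hv) hvcv.symm)

theorem exists_reachIn_of_mem_liftModel (hC : DominatesAdhesions G T β x C)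
    (hp : p ∈ liftModel T C B X w) : ∃ u ∈ X w, ReachIn G (liftModel T C B X w) p u := by
  rcases mem_liftModel.mp hp with ⟨u, hu, rfl⟩ | ⟨y, hatt, hpy⟩
  · exact ⟨u, hu, .refl hp⟩
  obtain ⟨-, hxy, u, hu, huy⟩ := id hatt
  obtain ⟨c, hc, huc⟩ := hC.exists_adj hxy u u.2 huy
  exact ⟨u, hu, (((hC.connectedIn hxy).reachIn hpy hc).mono (subset_liftModel hatt)).trans
    (.of_adj (subset_liftModel hatt hc) (val_mem_liftModel hu) huc.symm)⟩

theorem connectedIn_liftModel (hX : IsInducedModel H (torso G T β x) X)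
    (hC : DominatesAdhesions G T β x C) (hsub : ∀ w ∉ B, (X w).Subsingleton) :
    ConnectedIn G (liftModel T C B X w) := by
  obtain ⟨u₀, hu₀⟩ := (hX.1 w).1
  refine ⟨⟨_, val_mem_liftModel hu₀⟩, fun p hp q hq => ?_⟩
  obtain ⟨u, hu, hpu⟩ := exists_reachIn_of_mem_liftModel hC hp
  obtain ⟨v, hv, hqv⟩ := exists_reachIn_of_mem_liftModel hC hq
  have huv : ReachIn G (liftModel T C B X w) u v :=
    ReachIn.map (fun _ h => val_mem_liftModel h)
      (fun _ ha _ hb h => reachIn_liftModel_of_torso_adj hC hsub ha hb h) ((hX.1 w).reachIn hu hv)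
  exact hpu.trans (huv.trans hqv.symm)

theorem disjoint_liftModel (hdec : IsTreeDecomp G T β) (hX : IsInducedModel H (torso G T β x) X)
    (hB : ∀ b ∈ B, ∀ b' ∈ B, ¬ H.Adj b b') (hC : DominatesAdhesions G T β x C) (hne : w ≠ w') :
    Disjoint (liftModel T C B X w) (liftModel T C B X w') := by
  rw [Set.disjoint_left]
  intro p hp hp'
  rcases mem_liftModel.mp hp with ⟨u, hu, rfl⟩ | ⟨y, hatt, hpy⟩ <;>
    rcases mem_liftModel.mp hp' with ⟨u', hu', hu'p⟩ | ⟨y', hatt', hpy'⟩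
  · exact hX.ne_of_mem hne hu hu' (Subtype.val_injective hu'p).symm
  · exact notMem_bag_of_mem_strictSide hatt'.2.1.ne (hC.subset_strictSide hatt'.2.1 hpy') u.2
  · exact notMem_bag_of_mem_strictSide hatt.2.1.ne (hC.subset_strictSide hatt.2.1 hpy)
      (hu'p ▸ u'.2)
  · obtain rfl | hyy := eq_or_ne y y'
    · exact hne (hatt.eq hX hB hatt')
    · exact Set.disjoint_left.mp (hdec.disjoint_strictSide hatt.2.1 hatt'.2.1 hyy)
        (hC.subset_strictSide hatt.2.1 hpy) (hC.subset_strictSide hatt'.2.1 hpy')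

theorem exists_adj_liftModel (hX : IsInducedModel H (torso G T β x) X)
    (hC : DominatesAdhesions G T β x C) (hBc : ∀ a ∉ B, ∀ a' ∉ B, ¬ H.Adj a a')
    (h : H.Adj w w') : ∃ a ∈ liftModel T C B X w, ∃ b ∈ liftModel T C B X w', G.Adj a b := by
  obtain ⟨u, hu, u', hu', -, hG | ⟨y, hxy, huy, hu'y⟩⟩ := hX.2.2.1 w w' h
  · exact ⟨u, val_mem_liftModel hu, u', val_mem_liftModel hu', hG⟩
  by_cases hw' : w' ∈ B
  · obtain ⟨c, hc, huc⟩ := hC.exists_adj hxy u u.2 huy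
    exact ⟨u, val_mem_liftModel hu, c, subset_liftModel ⟨hw', hxy, u', hu', hu'y⟩ hc, huc⟩
  · have hw : w ∈ B := by
      by_contra hw
      exact hBc w hw w' hw' h
    obtain ⟨c, hc, hu'c⟩ := hC.exists_adj hxy u' u'.2 hu'y
    exact ⟨c, subset_liftModel ⟨hw, hxy, u, hu, huy⟩ hc, u', val_mem_liftModel hu', hu'c.symm⟩

/-- A `G`-edge from `X w` into `C y` must end in the adhesion `β(x,y)`, which `X w'` meets. -/
theorem adj_of_adj_of_attaches (hdec : IsTreeDecomp G T β)
    (hX : IsInducedModel H (torso G T β x) X) (hC : DominatesAdhesions G T β x C) (hne : w ≠ w')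
    {u : {v // v ∈ β x}} (hu : u ∈ X w) (hatt : Attaches T B X w' y) (hq : q ∈ C y)
    (h : G.Adj u q) : H.Adj w w' := by
  obtain ⟨-, hxy, u', hu', hu'y⟩ := hatt
  have huy := (hdec.mem_adhesion_of_adj hxy (hC.subset_strictSide hxy hq) h.symm
    fun hu => notMem_bag_of_mem_strictSide hxy.ne hu u.2).2
  exact hX.adj_of_mem_adhesion hxy hne hu hu' huy hu'y

theorem not_adj_liftModel (hdec : IsTreeDecomp G T β) (hX : IsInducedModel H (torso G T β x) X)
    (hB : ∀ b ∈ B, ∀ b' ∈ B, ¬ H.Adj b b') (hC : DominatesAdhesions G T β x C) (hne : w ≠ w')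
    (hH : ¬ H.Adj w w') (hp : p ∈ liftModel T C B X w) (hq : q ∈ liftModel T C B X w') :
    ¬ G.Adj p q := by
  intro h
  rcases mem_liftModel.mp hp with ⟨u, hu, rfl⟩ | ⟨y, hatt, hpy⟩ <;>
    rcases mem_liftModel.mp hq with ⟨u', hu', rfl⟩ | ⟨y', hatt', hqy'⟩
  · exact hX.2.2.2 w w' hne hH u hu u' hu' ⟨hX.ne_of_mem hne hu hu', Or.inl h⟩
  · exact hH (adj_of_adj_of_attaches hdec hX hC hne hu hatt' hqy' h)
  · exact hH (adj_of_adj_of_attaches hdec hX hC hne.symm hu' hatt hpy h.symm).symm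
  · obtain rfl | hyy := eq_or_ne y y'
    · exact hne (hatt.eq hX hB hatt')
    · exact hdec.not_adj_of_mem_strictSide hatt.2.1 hatt'.2.1 hyy
        (hC.subset_strictSide hatt.2.1 hpy) (hC.subset_strictSide hatt'.2.1 hqy') h

theorem isInducedModel_liftModel (hdec : IsTreeDecomp G T β)
    (hX : IsInducedModel H (torso G T β x) X) (hB : ∀ b ∈ B, ∀ b' ∈ B, ¬ H.Adj b b')
    (hBc : ∀ a ∉ B, ∀ a' ∉ B, ¬ H.Adj a a') (hsub : ∀ w ∉ B, (X w).Subsingleton)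
    (hC : DominatesAdhesions G T β x C) : IsInducedModel H G (liftModel T C B X) :=
  ⟨fun _ => connectedIn_liftModel hX hC hsub,
    fun _ _ hne => disjoint_liftModel hdec hX hB hC hne,
    fun _ _ h => exists_adj_liftModel hX hC hBc h,
    fun _ _ hne hH _ hp _ hq => not_adj_liftModel hdec hX hB hC hne hH hp hq⟩

end LiftModel

theorem statement17_general {W V ι : Type}
    (H : SimpleGraph W) (A B : Set W)
    (hcover : ∀ w : W, w ∈ A ∨ w ∈ B)
    (hAstable : ∀ a ∈ A, ∀ a' ∈ A, ¬ H.Adj a a')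
    (hBstable : ∀ b ∈ B, ∀ b' ∈ B, ¬ H.Adj b b')
    (G : SimpleGraph V) (T : SimpleGraph ι) (β : ι → Finset V)
    (hdec : IsTreeDecomp G T β) (htight : Tight G T β) (x : ι)
    (X : W → Set {v : V // v ∈ β x})
    (hmodel : IsInducedModel H (torso G T β x) X)
    (hA : ∀ a ∈ A, (X a).ncard = 1) :
    InducedMinor H G := by
  have hmemA : ∀ w ∉ B, w ∈ A := fun w hw => (hcover w).resolve_right hw
  have hsub : ∀ w ∉ B, (X w).Subsingleton := fun w hw => by
    obtain ⟨s, hs⟩ := Set.ncard_eq_one.mp (hA w (hmemA w hw))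
    exact hs ▸ Set.subsingleton_singleton
  have hBc : ∀ a ∉ B, ∀ a' ∉ B, ¬ H.Adj a a' := fun a ha a' ha' =>
    hAstable a (hmemA a ha) a' (hmemA a' ha')
  obtain ⟨C, hC⟩ := htight.exists_dominatesAdhesions x
  exact ⟨_, isInducedModel_liftModel hdec hmodel hBstable hBc hsub hC⟩

/-- If `(T, β)` is a tight tree decomposition of `G` and some torso has an
induced `H`-model whose branch sets over the side `A` of the bipartition of `H` are
singletons, then `G` has an induced minor isomorphic to `H`. -/
theorem statement17 {W V ι : Type} [Fintype W] [Fintype V] [Fintype ι]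
    (H : SimpleGraph W) (A B : Set W)
    (hcover : ∀ w : W, w ∈ A ∨ w ∈ B) (hdisj : ∀ w : W, ¬ (w ∈ A ∧ w ∈ B))
    (hAstable : ∀ a ∈ A, ∀ a' ∈ A, ¬ H.Adj a a')
    (hBstable : ∀ b ∈ B, ∀ b' ∈ B, ¬ H.Adj b b')
    (G : SimpleGraph V) (T : SimpleGraph ι) (β : ι → Finset V)
    (hdec : IsTreeDecomp G T β) (htight : Tight G T β) (x : ι)
    (X : W → Set {v : V // v ∈ β x})
    (hmodel : IsInducedModel H (torso G T β x) X)
    (hA : ∀ a ∈ A, (X a).ncard = 1) :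
    InducedMinor H G :=
  statement17_general H A B hcover hAstable hBstable G T β hdec htight x X hmodel hA
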